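/- arXiv:1801.10097 — 2 statements merged into one kernel-verified Lean document; each statement's English description precedes it below -/
import Mathlib

section
/- Let S be a finite set, σ a permutation of S, and ω : S → ℝ[[X]] a weight function into formal power series over ℝ such that every ω(s) has zero constant coefficient and ω(σ(s)) = ω(s) for all s ∈ S. Extend σ to finite multisets of S elementwise, and define the weight of a finite multiset M to be the product of ω(s) over the elements of M counted with multiplicity. Then Σ_{M : σ·M = M} ω(M) = exp( Σ_{i≥1} (1/i)·Σ_{s : σ^i(s) = s} ω(s)^i ), where the left-hand sum ranges over all finite multisets of S fixed by σ, both infinite sums converge coefficientwise (for each fixed exponent of X only finitely many terms contribute, since every ω(s) has positive order), and exp denotes the formal exponential applied to a power series with zero constant term. -/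
/-!
Split `S` into the cycles `c` of `σ`. A multiset is fixed by `σ` exactly when its multiplicity
function is constant on cycles, so fixed multisets correspond to functions `m : cycles → ℕ` and
their generating function is `∏_c (1 - w_c)⁻¹`, where `w_c = ∏_{s ∈ c} ω s = ω(s)^{|c|}`.
A point of a cycle of length `ℓ` is fixed by `σ^i` iff `ℓ ∣ i`, so that cycle contributes
`∑_k (ℓ / ℓk) w_c^k = -log (1 - w_c)` to the exponent. Finally `exp` turns sums into products and
`exp (-log (1 - w)) = (1 - w)⁻¹`; both facts follow from uniqueness of solutions of `F' = B F`,
which `exp A` solves with `B = A'`.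
-/

/-- The formal exponential of a power series (intended for series with zero
constant coefficient, in which case for each `d` only finitely many `i` give a
nonzero contribution `coeff d (A ^ i) / i!`). -/
noncomputable def formalExp (A : PowerSeries ℝ) : PowerSeries ℝ :=
  PowerSeries.mk fun d => ∑ᶠ i : ℕ, PowerSeries.coeff (R := ℝ) d (A ^ i) / (Nat.factorial i : ℝ)

/-- The weight of a finite multiset: the product of the weights of its elements,
counted with multiplicity. -/
noncomputable def msWeight {S : Type} (ω : S → PowerSeries ℝ) (M : Multiset S) :
    PowerSeries ℝ :=
  (M.map ω).prod

open PowerSeries Finset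

namespace PowerSeries

section CommRing

variable {R : Type*} [CommRing R]

theorem eq_of_derivative_eq_mul [IsDomain R] [CharZero R] {B F G : R⟦X⟧}
    (hF : d⁄dX R F = B * F) (hG : d⁄dX R G = B * G) (h0 : constantCoeff F = constantCoeff G) :
    F = G := by
  ext n
  induction n using Nat.strong_induction_on with
  | _ n ih =>
    cases n with
    | zero => simpa using h0
    | succ n =>
      have hB : coeff n (B * F) = coeff n (B * G) := by
        rw [coeff_mul, coeff_mul]
        exact sum_congr rfl fun p hp => by
          rw [ih p.2 (by have := mem_antidiagonal.1 hp; omega)]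
      rw [← hF, ← hG, coeff_derivative, coeff_derivative] at hB
      exact mul_right_cancel₀ (Nat.cast_add_one_ne_zero n) hB

theorem coeff_eq_of_sModEq {n : ℕ} {f g : R⟦X⟧} (h : f ≡ g [SMOD Ideal.span {(X : R⟦X⟧) ^ n}])
    {m : ℕ} (hm : m < n) : coeff m f = coeff m g := by
  rw [SModEq.sub_mem, Ideal.mem_span_singleton] at h
  rw [← sub_eq_zero, ← map_sub]
  exact X_pow_dvd_iff.1 h m hm

theorem coeff_pow_eq_zero_of_lt {w : R⟦X⟧} (hw : constantCoeff w = 0) {d n : ℕ} (h : d < n) :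
    coeff d (w ^ n) = 0 :=
  X_pow_dvd_iff.1 (pow_dvd_pow_of_dvd (X_dvd_iff.2 hw) n) d h

end CommRing

variable {R : Type*} [Field R]

theorem inv_one_sub_sModEq_geom_sum {w : R⟦X⟧} (hw : constantCoeff w = 0) (n : ℕ) :
    (1 - w)⁻¹ ≡ ∑ k ∈ range n, w ^ k [SMOD Ideal.span {(X : R⟦X⟧) ^ n}] := by
  rw [SModEq.sub_mem, Ideal.mem_span_singleton]
  have hinv : (1 - w)⁻¹ * (1 - w) = 1 := PowerSeries.inv_mul_cancel _ (by simp [hw])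
  have : (1 - w)⁻¹ - ∑ k ∈ range n, w ^ k = (1 - w)⁻¹ * w ^ n := by
    calc _ = (1 - w)⁻¹ * (1 - (1 - w) * ∑ k ∈ range n, w ^ k) := by
          rw [mul_sub, ← mul_assoc, hinv]; ring
      _ = _ := by rw [mul_neg_geom_sum, sub_sub_cancel]
  rw [this]
  exact (pow_dvd_pow_of_dvd (X_dvd_iff.2 hw) n).mul_left _

theorem coeff_prod_inv_one_sub {ι : Type*} [Fintype ι] {w : ι → R⟦X⟧}
    (hw : ∀ i, constantCoeff (w i) = 0) (d : ℕ) :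
    coeff d (∏ i, (1 - w i)⁻¹) = ∑ᶠ m : ι → ℕ, coeff d (∏ i, w i ^ m i) := by
  classical
  have htrunc := SModEq.prod fun i (_ : i ∈ univ) => inv_one_sub_sModEq_geom_sum (hw i) (d + 1)
  rw [coeff_eq_of_sModEq htrunc d.lt_succ_self, prod_univ_sum, map_sum]
  refine (finsum_eq_sum_of_support_subset _ fun m hm => ?_).symm
  simp only [Fintype.coe_piFinset, Set.mem_pi, Set.mem_univ, coe_range, Set.mem_Iio,
    forall_const]
  intro i
  by_contra! h
  have hdvd : X ^ m i ∣ ∏ i, w i ^ m i :=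
    (pow_dvd_pow_of_dvd (X_dvd_iff.2 (hw i)) (m i)).trans (dvd_prod_of_mem _ (mem_univ i))
  exact hm (X_pow_dvd_iff.1 hdvd d (by omega))

variable (R) in
/-- The series `∑_{n ≥ 1} Xⁿ / n = -log (1 - X)`; its constant coefficient is `(0 : R)⁻¹ = 0`. -/
noncomputable def negLogOneSub : R⟦X⟧ := mk fun n => (n : R)⁻¹

theorem coeff_subst_negLogOneSub {w : R⟦X⟧} (hw : constantCoeff w = 0) (d : ℕ) :
    coeff d ((negLogOneSub R).subst w) = ∑ᶠ k : ℕ, (k : R)⁻¹ * coeff d (w ^ k) := by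
  simp [coeff_subst' (HasSubst.of_constantCoeff_zero' hw), negLogOneSub]

theorem constantCoeff_subst_negLogOneSub {w : R⟦X⟧} (hw : constantCoeff w = 0) :
    constantCoeff ((negLogOneSub R).subst w) = 0 := by
  rw [← coeff_zero_eq_constantCoeff_apply, coeff_subst_negLogOneSub hw]
  refine finsum_eq_zero_of_forall_eq_zero fun k => ?_
  cases k <;> simp [hw]

theorem derivative_negLogOneSub [CharZero R] : d⁄dX R (negLogOneSub R) = (1 - X)⁻¹ := by
  have h : d⁄dX R (negLogOneSub R) = mk 1 := by
    ext n
    simp [negLogOneSub, coeff_derivative]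
    field_simp
  rw [PowerSeries.eq_inv_iff_mul_eq_one (by simp), h, mk_one_mul_one_sub_eq_one]

theorem subst_inv_one_sub_X {w : R⟦X⟧} (hw : constantCoeff w = 0) :
    ((1 - X)⁻¹ : R⟦X⟧).subst w = (1 - w)⁻¹ := by
  have hs := HasSubst.of_constantCoeff_zero' hw
  have h1X : ((1 - X : R⟦X⟧)).subst w = 1 - w := by
    rw [← coe_substAlgHom hs, map_sub, map_one, coe_substAlgHom, subst_X hs]
  rw [PowerSeries.eq_inv_iff_mul_eq_one (by simp [hw]), ← h1X, ← subst_mul hs,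
    PowerSeries.inv_mul_cancel _ (by simp), ← coe_substAlgHom hs, map_one]

end PowerSeries

section FormalExp

variable {A B : ℝ⟦X⟧}

theorem formalExp_eq_subst (hA : constantCoeff A = 0) : formalExp A = (exp ℝ).subst A := by
  ext d
  rw [formalExp, coeff_mk, coeff_subst' (HasSubst.of_constantCoeff_zero' hA)]
  refine finsum_congr fun i => ?_
  simp [coeff_exp, div_eq_inv_mul]

theorem derivative_formalExp (hA : constantCoeff A = 0) :
    d⁄dX ℝ (formalExp A) = formalExp A * d⁄dX ℝ A := by
  rw [formalExp_eq_subst hA, derivative_subst (HasSubst.of_constantCoeff_zero' hA),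
    derivative_exp]

theorem constantCoeff_formalExp (hA : constantCoeff A = 0) : constantCoeff (formalExp A) = 1 := by
  rw [← coeff_zero_eq_constantCoeff_apply, formalExp, coeff_mk, finsum_eq_single _ 0]
  · simp
  · intro i hi
    simp [hA, hi]

theorem formalExp_zero : formalExp 0 = 1 := by
  refine eq_of_derivative_eq_mul (B := 0) ?_ (by simp) ?_
  · rw [derivative_formalExp (map_zero _), map_zero, mul_zero, zero_mul]
  · rw [constantCoeff_formalExp (map_zero _), map_one]

theorem formalExp_add (hA : constantCoeff A = 0) (hB : constantCoeff B = 0) :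
    formalExp (A + B) = formalExp A * formalExp B := by
  have hAB : constantCoeff (A + B) = 0 := by rw [map_add, hA, hB, add_zero]
  refine eq_of_derivative_eq_mul (B := d⁄dX ℝ (A + B)) ?_ ?_ ?_
  · rw [derivative_formalExp hAB, mul_comm]
  · rw [Derivation.leibniz, derivative_formalExp hA, derivative_formalExp hB, map_add,
      smul_eq_mul, smul_eq_mul]
    ring
  · rw [map_mul, constantCoeff_formalExp hAB, constantCoeff_formalExp hA,
      constantCoeff_formalExp hB, mul_one]

theorem formalExp_sum {ι : Type*} (s : Finset ι) {A : ι → ℝ⟦X⟧}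
    (hA : ∀ i ∈ s, constantCoeff (A i) = 0) :
    formalExp (∑ i ∈ s, A i) = ∏ i ∈ s, formalExp (A i) := by
  induction s using Finset.cons_induction with
  | empty => exact formalExp_zero
  | cons i s hi ih =>
    have hs : ∀ j ∈ s, constantCoeff (A j) = 0 := fun j hj => hA j (mem_cons_of_mem hj)
    have hsum : constantCoeff (∑ j ∈ s, A j) = 0 := by rw [map_sum]; exact sum_eq_zero hs
    rw [sum_cons, prod_cons, formalExp_add (hA i (mem_cons_self i s)) hsum, ih hs]

theorem formalExp_subst_negLogOneSub {w : ℝ⟦X⟧} (hw : constantCoeff w = 0) :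
    formalExp ((negLogOneSub ℝ).subst w) = (1 - w)⁻¹ := by
  have hL := constantCoeff_subst_negLogOneSub hw
  refine eq_of_derivative_eq_mul (B := d⁄dX ℝ ((negLogOneSub ℝ).subst w)) ?_ ?_ ?_
  · rw [derivative_formalExp hL, mul_comm]
  · rw [derivative_subst (HasSubst.of_constantCoeff_zero' hw), derivative_negLogOneSub,
      subst_inv_one_sub_X hw, derivative_inv', map_sub, Derivation.map_one_eq_zero]
    ring
  · rw [constantCoeff_formalExp hL, constantCoeff_inv, map_sub, hw, map_one, sub_zero, inv_one]

end FormalExp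

theorem finsum_ite_dvd {M : Type*} [AddCommMonoid M] {ℓ : ℕ} (hℓ : 0 < ℓ) (g : ℕ → M) :
    ∑ᶠ i, (if ℓ ∣ i then g (i / ℓ) else 0) = ∑ᶠ k, g k := by
  have hrange : Set.range (ℓ * ·) = {i | ℓ ∣ i} := by
    ext i
    simp [Dvd.dvd, eq_comm]
  rw [← funext fun k => congrArg g (Nat.mul_div_cancel_left k hℓ),
    ← finsum_mem_range (f := fun i => g (i / ℓ)) (mul_right_injective₀ hℓ.ne'), hrange,
    finsum_mem_def]
  exact finsum_congr fun i => by simp [Set.indicator_apply]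

section PermCycles

variable {S : Type*} (σ : Equiv.Perm S)

/-- The cycles of `σ`, fixed points counting as cycles of length one. -/
abbrev Cycles : Type _ := MulAction.orbitRel.Quotient (Subgroup.zpowers σ) S

abbrev Cycles.mk (s : S) : Cycles σ := Quotient.mk'' s

namespace Cycles

variable {σ}

theorem mk_eq_mk_iff {a b : S} :
    mk σ a = mk σ b ↔ a ∈ MulAction.orbit (Subgroup.zpowers σ) b :=
  Quotient.eq''.trans MulAction.orbitRel_apply

theorem mk_apply (s : S) : mk σ (σ s) = mk σ s :=
  mk_eq_mk_iff.2 ⟨⟨σ, Subgroup.mem_zpowers σ⟩, rfl⟩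

theorem apply_eq_of_mk_eq {β : Sort*} {f : S → β} (hf : ∀ s, f (σ s) = f s) {a b : S}
    (h : mk σ a = mk σ b) : f a = f b := by
  obtain ⟨⟨_, k, rfl⟩, rfl⟩ := mk_eq_mk_iff.1 h
  clear h
  change f ((σ ^ k) b) = f b
  induction k using Int.induction_on with
  | zero => rfl
  | succ k ih => rw [add_comm, zpow_one_add, Equiv.Perm.mul_apply, hf, ih]
  | pred k ih => rw [← ih, ← hf, ← Equiv.Perm.mul_apply, ← zpow_one_add, add_sub_cancel]

theorem pow_apply_eq_self_iff_of_mk_eq {a s : S} (h : mk σ s = mk σ a) (i : ℕ) :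
    (σ ^ i) s = s ↔ Function.minimalPeriod σ a ∣ i := by
  have hfix : ∀ x, ((σ ^ i) (σ x) = σ x) = ((σ ^ i) x = x) := fun x => by
    rw [← Equiv.Perm.mul_apply, ← pow_succ, pow_succ', Equiv.Perm.mul_apply,
      σ.injective.eq_iff]
  rw [apply_eq_of_mk_eq (f := fun x => (σ ^ i) x = x) hfix h, ← Equiv.Perm.iterate_eq_pow]
  exact Function.isPeriodicPt_iff_minimalPeriod_dvd

variable [Fintype S]

open scoped Classical

variable (σ) in
theorem card_filter_mk_eq (a : S) : #{s | mk σ s = mk σ a} = Function.minimalPeriod σ a := by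
  rw [← Fintype.card_subtype]
  have := MulAction.minimalPeriod_eq_card σ a
  simp only [Equiv.Perm.smul_def] at this
  rw [this]
  exact Fintype.card_congr (Equiv.subtypeEquivRight fun s => mk_eq_mk_iff)

variable (σ) in
theorem minimalPeriod_pos (a : S) : 0 < Function.minimalPeriod σ a := by
  rw [← card_filter_mk_eq]
  exact card_pos.2 ⟨a, mem_filter.2 ⟨mem_univ a, rfl⟩⟩

theorem finsum_mem_fixedPoints_eq_sum {M : Type*} [AddCommMonoid M] (f : S → M) (i : ℕ) :
    ∑ᶠ s ∈ {s : S | (σ ^ i) s = s}, f s = ∑ c, ∑ s with mk σ s = c ∧ (σ ^ i) s = s, f s := by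
  have hfix : {s : S | (σ ^ i) s = s} = ↑({s | (σ ^ i) s = s} : Finset S) := by
    ext
    simp
  rw [hfix, finsum_mem_coe_finset, ← sum_fiberwise _ (mk σ)]
  simp only [filter_filter, and_comm]

theorem sum_filter_mk_eq_pow_apply_eq_self {M : Type*} [AddCommMonoid M] {f : S → M}
    (hf : ∀ s, f (σ s) = f s) (a : S) (i : ℕ) :
    ∑ s with mk σ s = mk σ a ∧ (σ ^ i) s = s, f s =
      if Function.minimalPeriod σ a ∣ i then Function.minimalPeriod σ a • f a else 0 := by
  rw [← filter_filter]
  split_ifs with hi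
  · rw [filter_true_of_mem fun s hs => (pow_apply_eq_self_iff_of_mk_eq (mem_filter.1 hs).2 i).2 hi,
      sum_congr rfl fun s hs => apply_eq_of_mk_eq hf (mem_filter.1 hs).2, sum_const,
      card_filter_mk_eq]
  · rw [filter_false_of_mem fun s hs =>
      mt (pow_apply_eq_self_iff_of_mk_eq (mem_filter.1 hs).2 i).1 hi, sum_empty]

end Cycles

section Weights

open scoped Classical

variable [Fintype S] {M : Type*} [CommMonoid M]

noncomputable def cycleWeight (ω : S → M) (c : Cycles σ) : M := ∏ s with Cycles.mk σ s = c, ω s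

noncomputable def multisetOfCycles (m : Cycles σ → ℕ) : Multiset S :=
  ∑ s, m (Cycles.mk σ s) • {s}

variable {σ}

theorem cycleWeight_mk {ω : S → M} (hω : ∀ s, ω (σ s) = ω s) (a : S) :
    cycleWeight σ ω (Cycles.mk σ a) = ω a ^ Function.minimalPeriod σ a := by
  rw [cycleWeight, prod_congr rfl fun s hs => Cycles.apply_eq_of_mk_eq hω (mem_filter.1 hs).2,
    prod_const, Cycles.card_filter_mk_eq]

theorem count_multisetOfCycles (m : Cycles σ → ℕ) (a : S) :
    (multisetOfCycles σ m).count a = m (Cycles.mk σ a) := by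
  simp [multisetOfCycles, Multiset.count_sum', Multiset.count_singleton]

theorem multisetOfCycles_injective : Function.Injective (multisetOfCycles σ) := by
  intro m m' h
  funext c
  induction c using Quotient.inductionOn' with
  | h a => simpa only [count_multisetOfCycles] using congrArg (Multiset.count a) h

theorem range_multisetOfCycles : Set.range (multisetOfCycles σ) = {M | M.map σ = M} := by
  ext M
  constructor
  · rintro ⟨m, rfl⟩
    ext a
    obtain ⟨b, rfl⟩ := σ.surjective a
    rw [Multiset.count_map_eq_count' _ _ σ.injective, count_multisetOfCycles,
      count_multisetOfCycles, Cycles.mk_apply]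
  · intro hM
    have hcount : ∀ s, M.count (σ s) = M.count s := fun s => by
      conv_lhs => rw [← hM.out]
      exact Multiset.count_map_eq_count' _ _ σ.injective s
    refine ⟨fun c => M.count c.out, Multiset.ext.2 fun a => ?_⟩
    rw [count_multisetOfCycles]
    exact Cycles.apply_eq_of_mk_eq (f := M.count) hcount (Quotient.out_eq' _)

theorem prod_map_multisetOfCycles (ω : S → M) (m : Cycles σ → ℕ) :
    ((multisetOfCycles σ m).map ω).prod = ∏ c, cycleWeight σ ω c ^ m c := by
  rw [prod_multiset_map_count, prod_subset (subset_univ _) fun s _ hs => by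
      rw [Multiset.count_eq_zero_of_notMem (Multiset.mem_toFinset.not.1 hs), pow_zero]]
  simp only [count_multisetOfCycles, cycleWeight, ← prod_pow]
  rw [← prod_fiberwise univ (Cycles.mk σ)]
  refine prod_congr rfl fun c _ => prod_congr rfl fun s hs => ?_
  rw [(mem_filter.1 hs).2]

theorem constantCoeff_cycleWeight {R : Type*} [CommSemiring R] {ω : S → R⟦X⟧}
    (hω0 : ∀ s, constantCoeff (ω s) = 0) (c : Cycles σ) :
    constantCoeff (cycleWeight σ ω c) = 0 := by
  induction c using Quotient.inductionOn' with
  | h a => rw [cycleWeight, map_prod]; exact prod_eq_zero (mem_filter.2 ⟨mem_univ a, rfl⟩) (hω0 a)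

end Weights

end PermCycles

section Series

open scoped Classical

variable {S : Type} [Fintype S] {σ : Equiv.Perm S} {ω : S → ℝ⟦X⟧}

theorem fixedMultisetSeries_eq_prod_inv_one_sub (hω0 : ∀ s, constantCoeff (ω s) = 0) :
    (PowerSeries.mk fun d => ∑ᶠ M ∈ {M : Multiset S | M.map σ = M}, coeff d (msWeight ω M)) =
      ∏ c, (1 - cycleWeight σ ω c)⁻¹ := by
  ext d
  rw [coeff_mk, coeff_prod_inv_one_sub (constantCoeff_cycleWeight hω0), ← range_multisetOfCycles,
    finsum_mem_range multisetOfCycles_injective]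
  simp only [msWeight, prod_map_multisetOfCycles]

theorem finsum_coeff_cycle_eq_coeff_subst_negLogOneSub (hω0 : ∀ s, constantCoeff (ω s) = 0)
    (hωσ : ∀ s, ω (σ s) = ω s) (a : S) (d : ℕ) :
    ∑ᶠ i : ℕ, (i : ℝ)⁻¹ *
        coeff d (∑ s with Cycles.mk σ s = Cycles.mk σ a ∧ (σ ^ i) s = s, ω s ^ i) =
      coeff d ((negLogOneSub ℝ).subst (cycleWeight σ ω (Cycles.mk σ a))) := by
  have hℓ := Cycles.minimalPeriod_pos σ a
  rw [coeff_subst_negLogOneSub (constantCoeff_cycleWeight hω0 _), cycleWeight_mk hωσ,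
    ← finsum_ite_dvd hℓ fun k => (k : ℝ)⁻¹ * coeff d ((ω a ^ Function.minimalPeriod σ a) ^ k)]
  refine finsum_congr fun i => ?_
  rw [Cycles.sum_filter_mk_eq_pow_apply_eq_self (f := fun s => ω s ^ i) (by simp [hωσ]) a i]
  split_ifs with hdvd
  · obtain ⟨k, rfl⟩ := hdvd
    have hℓ' : (Function.minimalPeriod σ a : ℝ) ≠ 0 := Nat.cast_ne_zero.2 hℓ.ne'
    rw [map_nsmul, nsmul_eq_mul, Nat.mul_div_cancel_left k hℓ, ← pow_mul, Nat.cast_mul]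
    field_simp
  · rw [map_zero, mul_zero]

theorem fixedPointLogSeries_eq_sum_subst_negLogOneSub (hω0 : ∀ s, constantCoeff (ω s) = 0)
    (hωσ : ∀ s, ω (σ s) = ω s) :
    (PowerSeries.mk fun d => ∑ᶠ i ∈ {i : ℕ | 1 ≤ i},
        (1 / (i : ℝ)) * coeff d (∑ᶠ s ∈ {s : S | (σ ^ i) s = s}, ω s ^ i)) =
      ∑ c, (negLogOneSub ℝ).subst (cycleWeight σ ω c) := by
  ext d
  -- the condition `1 ≤ i` can be dropped because `1 / 0 = 0`
  have hzero : Function.support (fun i : ℕ =>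
      (1 / (i : ℝ)) * coeff d (∑ᶠ s ∈ {s : S | (σ ^ i) s = s}, ω s ^ i)) ⊆ {i | 1 ≤ i} := by
    intro i hi
    by_contra h
    obtain rfl : i = 0 := by simpa using h
    simp at hi
  have hfinite : ∀ c ∈ (univ : Finset (Cycles σ)), Function.HasFiniteSupport fun i : ℕ =>
      (i : ℝ)⁻¹ * coeff d (∑ s with Cycles.mk σ s = c ∧ (σ ^ i) s = s, ω s ^ i) := by
    refine fun c _ => (Set.finite_Iic d).subset fun i hi => ?_
    by_contra h
    rw [Set.mem_Iic, not_le] at h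
    refine hi ?_
    dsimp only
    rw [map_sum, sum_eq_zero fun s _ => coeff_pow_eq_zero_of_lt (hω0 s) h, mul_zero]
  rw [coeff_mk, finsum_mem_def, Set.indicator_eq_self.2 hzero]
  conv_lhs =>
    enter [1, i]
    dsimp only
    rw [Cycles.finsum_mem_fixedPoints_eq_sum, one_div, map_sum, mul_sum]
  rw [finsum_sum_comm _ _ hfinite, map_sum]
  refine sum_congr rfl fun c _ => ?_
  induction c using Quotient.inductionOn' with
  | h a => exact finsum_coeff_cycle_eq_coeff_subst_negLogOneSub hω0 hωσ a d

end Series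

theorem statement8 (S : Type) [Fintype S] (σ : Equiv.Perm S) (ω : S → PowerSeries ℝ)
    (hω0 : ∀ s, PowerSeries.constantCoeff (R := ℝ) (ω s) = 0)
    (hωσ : ∀ s, ω (σ s) = ω s) :
    -- the coefficientwise sum `∑_{M : σ·M = M} ω(M)` (for each fixed degree `d`
    -- only finitely many fixed multisets contribute, since every `ω s` has
    -- positive order) equals `exp (∑_{i ≥ 1} (1/i) ∑_{s : σ^i s = s} ω(s)^i)`
    (PowerSeries.mk fun d =>
        ∑ᶠ M ∈ {M : Multiset S | M.map σ = M}, PowerSeries.coeff (R := ℝ) d (msWeight ω M)) =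
      formalExp (PowerSeries.mk fun d =>
        ∑ᶠ i ∈ {i : ℕ | 1 ≤ i},
          (1 / (i : ℝ)) *
            PowerSeries.coeff (R := ℝ) d (∑ᶠ s ∈ {s : S | (σ ^ i) s = s}, ω s ^ i)) := by
  have hw := constantCoeff_cycleWeight (σ := σ) hω0
  rw [fixedMultisetSeries_eq_prod_inv_one_sub hω0,
    fixedPointLogSeries_eq_sum_subst_negLogOneSub hω0 hωσ,
    formalExp_sum _ fun c _ => constantCoeff_subst_negLogOneSub (hw c)]
  exact prod_congr rfl fun c _ => (formalExp_subst_negLogOneSub (hw c)).symm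
end

section
/- Let S be a finite set, σ a permutation of S, and ω : S → ℝ[[X]] a weight function into formal power series over ℝ such that every ω(s) has zero constant coefficient and ω(σ(s)) = ω(s) for all s ∈ S. Let (O_j)_{j∈J} be the orbits of the cyclic group generated by σ acting on S, with representatives s_j ∈ O_j and sizes r_j = |O_j|. Then Σ_{M : σ·M = M} ω(M) = Π_{j∈J} (1 − ω(s_j)^{r_j})^{-1}, where the sum ranges over all finite multisets of S fixed by σ, the sum converges coefficientwise, and each factor is the inverse of a power series with constant coefficient 1. -/
open MulAction

/-!
A multiset `M` is fixed by `σ` exactly when its multiplicity function is constant on the orbits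
of `⟨σ⟩`, so fixed multisets correspond to exponent vectors `n : orbits → ℕ`, and the weight of
the multiset attached to `n` is `∏ⱼ (ω(sⱼ) ^ rⱼ) ^ nⱼ`. Summing over all `n` factors the sum
into a product of geometric series `∑ₙ (ω(sⱼ) ^ rⱼ) ^ n = (1 - ω(sⱼ) ^ rⱼ)⁻¹`. All these sums
are finite in each degree because the weights have no constant term.
-/

open Finset

namespace PowerSeries

section CommSemiring

variable {R ι κ : Type*} [CommSemiring R]

/-- Meaningful only for `CoeffLocallyFinite` families: otherwise some `∑ᶠ` has infinite support
and takes the junk value `0`. -/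
noncomputable def coeffwiseSum (s : Set ι) (f : ι → R⟦X⟧) : R⟦X⟧ :=
  mk fun d => ∑ᶠ i ∈ s, coeff d (f i)

def CoeffLocallyFinite (s : Set ι) (f : ι → R⟦X⟧) : Prop :=
  ∀ n, {i | i ∈ s ∧ ¬X ^ n ∣ f i}.Finite

theorem CoeffLocallyFinite.of_X_pow_dvd {s : Set ι} {f : ι → R⟦X⟧} (g : ι → ℕ)
    (hdvd : ∀ i ∈ s, X ^ g i ∣ f i) (hg : ∀ n, {i | i ∈ s ∧ g i < n}.Finite) :
    CoeffLocallyFinite s f := fun n =>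
  (hg n).subset fun i ⟨hi, hndvd⟩ =>
    ⟨hi, not_le.mp fun hle => hndvd ((pow_dvd_pow X hle).trans (hdvd i hi))⟩

theorem trunc_coeffwiseSum {s : Set ι} {f : ι → R⟦X⟧} {n : ℕ} {F : Finset ι}
    (hFs : ↑F ⊆ s) (hF : {i | i ∈ s ∧ ¬X ^ n ∣ f i} ⊆ F) :
    trunc n (coeffwiseSum s f) = trunc n (∑ i ∈ F, f i) := by
  ext u
  rw [coeff_trunc, coeff_trunc]
  split_ifs with hu
  · simp only [coeffwiseSum, coeff_mk, map_sum]
    refine finsum_mem_eq_sum_of_subset _ (fun i ⟨hi, hne⟩ => hF ⟨hi, fun hdvd => ?_⟩) hFs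
    exact hne (X_pow_dvd_iff.mp hdvd u hu)
  · rfl

theorem coeffwiseSum_prod_mul {s : Set ι} {t : Set κ} {A : ι → R⟦X⟧} {B : κ → R⟦X⟧}
    (hA : CoeffLocallyFinite s A) (hB : CoeffLocallyFinite t B) :
    coeffwiseSum (s ×ˢ t) (fun p => A p.1 * B p.2) = coeffwiseSum s A * coeffwiseSum t B := by
  ext d
  set F := (hA (d + 1)).toFinset
  set G := (hB (d + 1)).toFinset
  have hFs : ↑F ⊆ s := fun i hi => ((hA (d + 1)).mem_toFinset.mp hi).1
  have hGt : ↑G ⊆ t := fun j hj => ((hB (d + 1)).mem_toFinset.mp hj).1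
  have hprod : {p : ι × κ | p ∈ s ×ˢ t ∧ ¬X ^ (d + 1) ∣ A p.1 * B p.2} ⊆ ↑(F ×ˢ G) := by
    rintro ⟨i, j⟩ ⟨⟨hi, hj⟩, hndvd⟩
    simp only [coe_product, Set.mem_prod, Set.Finite.coe_toFinset, Set.mem_ofPred_eq, F, G]
    exact ⟨⟨hi, fun h => hndvd (h.mul_right _)⟩, ⟨hj, fun h => hndvd (h.mul_left _)⟩⟩
  calc coeff d (coeffwiseSum (s ×ˢ t) fun p => A p.1 * B p.2)
      = coeff d (∑ p ∈ F ×ˢ G, A p.1 * B p.2) := by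
        rw [← coeff_coe_trunc_of_lt (Nat.lt_succ_self d),
          trunc_coeffwiseSum (by simpa using Set.prod_mono hFs hGt) hprod,
          coeff_coe_trunc_of_lt (Nat.lt_succ_self d)]
    _ = coeff d ((∑ i ∈ F, A i) * ∑ j ∈ G, B j) := by rw [sum_mul_sum, sum_product]
    _ = coeff d (coeffwiseSum s A * coeffwiseSum t B) := by
        rw [coeff_mul_eq_coeff_trunc_mul_trunc _ _ (Nat.lt_succ_self d),
          coeff_mul_eq_coeff_trunc_mul_trunc (coeffwiseSum s A) _ (Nat.lt_succ_self d),
          trunc_coeffwiseSum hFs (by simp [F]), trunc_coeffwiseSum hGt (by simp [G])]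

theorem coeffwiseSum_of_bijOn {s : Set ι} {t : Set κ} {f : κ → R⟦X⟧} (e : ι → κ)
    (he : Set.BijOn e s t) : coeffwiseSum t f = coeffwiseSum s (f ∘ e) := by
  ext d
  exact (finsum_mem_eq_of_bijOn e he fun _ _ => rfl).symm

theorem coeffLocallyFinite_pow {f : R⟦X⟧} (hf : constantCoeff f = 0) :
    CoeffLocallyFinite Set.univ (f ^ ·) :=
  .of_X_pow_dvd id (fun n _ => pow_dvd_pow_of_dvd (X_dvd_iff.mpr hf) n) fun n => by
    simpa using Set.finite_lt_nat n

theorem coeffLocallyFinite_prod_pow {α : Type*} [Fintype α] {w : α → R⟦X⟧}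
    (hw : ∀ a, constantCoeff (w a) = 0) :
    CoeffLocallyFinite Set.univ fun n : α → ℕ => ∏ a, w a ^ n a := by
  refine .of_X_pow_dvd (fun n => ∑ a, n a) (fun n _ => ?_) fun m => ?_
  · rw [← prod_pow_eq_pow_sum]
    exact prod_dvd_prod_of_dvd _ _ fun a _ => pow_dvd_pow_of_dvd (X_dvd_iff.mpr (hw a)) _
  · refine (Set.Finite.pi' fun _ => Set.finite_lt_nat m).subset fun n ⟨_, hn⟩ a => ?_
    exact lt_of_le_of_lt (single_le_sum (fun _ _ => Nat.zero_le _) (mem_univ a)) hn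

end CommSemiring

section Field

variable {k : Type*} [Field k]

theorem coeffwiseSum_pow {f : k⟦X⟧} (hf : constantCoeff f = 0) :
    coeffwiseSum Set.univ (f ^ ·) = (1 - f)⁻¹ := by
  have hX : X ∣ f := X_dvd_iff.mpr hf
  rw [PowerSeries.eq_inv_iff_mul_eq_one (by simp [hf])]
  ext d
  have hrange : {n | n ∈ Set.univ ∧ ¬X ^ (d + 1) ∣ f ^ n} ⊆ ↑(range (d + 1)) := by
    intro n ⟨_, hn⟩
    simp only [coe_range, Set.mem_Iio]
    by_contra! h
    exact hn ((pow_dvd_pow X h).trans (pow_dvd_pow_of_dvd hX n))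
  rw [coeff_mul_eq_coeff_trunc_mul_trunc _ _ (Nat.lt_succ_self d),
    trunc_coeffwiseSum (by simp) hrange,
    ← coeff_mul_eq_coeff_trunc_mul_trunc _ _ (Nat.lt_succ_self d), geom_sum_mul_neg, map_sub,
    X_pow_dvd_iff.mp (pow_dvd_pow_of_dvd hX (d + 1)) d (Nat.lt_succ_self d), sub_zero]

theorem coeffwiseSum_prod_pow {α : Type*} [Fintype α] (w : α → k⟦X⟧)
    (hw : ∀ a, constantCoeff (w a) = 0) :
    coeffwiseSum Set.univ (fun n : α → ℕ => ∏ a, w a ^ n a) = ∏ a, (1 - w a)⁻¹ := by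
  revert w
  refine Fintype.induction_empty_option (P := fun α _ => ∀ w : α → k⟦X⟧,
    (∀ a, constantCoeff (w a) = 0) →
      coeffwiseSum Set.univ (fun n : α → ℕ => ∏ a, w a ^ n a) = ∏ a, (1 - w a)⁻¹) ?_ ?_ ?_ α
  · intro α β _ e ih w hw
    rw [coeffwiseSum_of_bijOn _ (e.arrowCongr (Equiv.refl ℕ)).bijective.bijOn_univ]
    let : Fintype α := .ofEquiv β e.symm
    convert ih (w ∘ e) fun a => hw (e a) using 2
    · funext n
      simpa using (e.prod_comp fun b => w b ^ n (e.symm b)).symm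
    · exact (e.prod_comp fun b => (1 - w b)⁻¹).symm
  · intro w _
    ext d
    simp [coeffwiseSum, finsum_unique, coeff_one]
  · intro α _ ih w hw
    let e : (Option α → ℕ) ≃ ℕ × (α → ℕ) := Equiv.piOptionEquivProd
    have he : Set.BijOn e.symm (Set.univ ×ˢ Set.univ) Set.univ := by
      simpa using e.symm.bijective.bijOn_univ
    have hsplit : (fun n : Option α → ℕ => ∏ a, w a ^ n a) ∘ e.symm =
        fun p : ℕ × (α → ℕ) => w none ^ p.1 * ∏ a, w (some a) ^ p.2 a := by
      funext p
      simp [e, Fintype.prod_option]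
    rw [coeffwiseSum_of_bijOn _ he, hsplit,
      coeffwiseSum_prod_mul (coeffLocallyFinite_pow (hw none))
        (coeffLocallyFinite_prod_pow fun a => hw (some a)), coeffwiseSum_pow (hw none),
      ih _ fun a => hw (some a), Fintype.prod_option]

end Field

end PowerSeries

theorem Equiv.Perm.apply_eq_of_mem_orbit_zpowers {S β : Type*} {σ : Equiv.Perm S} {f : S → β}
    (hf : ∀ s, f (σ s) = f s) {s t : S} (ht : t ∈ orbit (Subgroup.zpowers σ) s) : f t = f s := by
  obtain ⟨⟨_, k, rfl⟩, rfl⟩ := ht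
  change f ((σ ^ k) s) = f s
  induction k using Int.induction_on generalizing s with
  | zero => rfl
  | succ k ih => rw [zpow_add_one, Equiv.Perm.mul_apply, ih, hf]
  | pred k ih =>
    rw [zpow_sub_one, Equiv.Perm.mul_apply, ih]
    simpa using (hf (σ⁻¹ s)).symm

theorem Multiset.map_perm_eq_self_iff {S : Type*} [DecidableEq S] (σ : Equiv.Perm S)
    (M : Multiset S) :
    M.map σ = M ↔ ∀ t, M.count (σ t) = M.count t := by
  rw [Multiset.ext, ← σ.forall_congr_right]
  simp only [Multiset.count_map_eq_count' σ M σ.injective, eq_comm]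

theorem MulAction.mem_orbit_out_iff {G α : Type*} [Group G] [MulAction G α]
    {q : orbitRel.Quotient G α} {a : α} : a ∈ orbit G q.out ↔ Quotient.mk _ a = q := by
  rw [← orbitRel.Quotient.orbit_eq_orbit_out q Quotient.out_eq', orbitRel.Quotient.mem_orbit]

section OrbitCounts

variable {G : Type*} {S : Type} [Group G] [MulAction G S] [Fintype S]

def multisetOfOrbitCounts (n : orbitRel.Quotient G S → ℕ) : Multiset S :=
  ∑ t, n (Quotient.mk _ t) • {t}

theorem count_multisetOfOrbitCounts [DecidableEq S] (n : orbitRel.Quotient G S → ℕ) (t : S) :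
    (multisetOfOrbitCounts n).count t = n (Quotient.mk _ t) := by
  simp [multisetOfOrbitCounts, Multiset.count_sum', Multiset.count_singleton]

theorem card_filter_mk_eq_natCard_orbit [DecidableEq (orbitRel.Quotient G S)]
    (q : orbitRel.Quotient G S) :
    #{t | Quotient.mk _ t = q} = Nat.card (orbit G q.out) := by
  have : orbit G q.out = ↑({t | Quotient.mk _ t = q} : Finset S) := by
    ext t
    simp [mem_orbit_out_iff]
  rw [this]
  exact (Nat.card_eq_finsetCard _).symm

theorem msWeight_multisetOfOrbitCounts [Fintype (orbitRel.Quotient G S)] {ω : S → PowerSeries ℝ}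
    (hω : ∀ s, ∀ t ∈ orbit G s, ω t = ω s) (n : orbitRel.Quotient G S → ℕ) :
    msWeight ω (multisetOfOrbitCounts n) = ∏ q, (ω q.out ^ Nat.card (orbit G q.out)) ^ n q := by
  classical
  have hsum : msWeight ω (multisetOfOrbitCounts n) = ∏ t, ω t ^ n (Quotient.mk _ t) := by
    rw [msWeight, multisetOfOrbitCounts, ← Multiset.coe_mapAddMonoidHom, map_sum,
      Multiset.prod_sum]
    simp [Multiset.map_nsmul, Multiset.prod_nsmul]
  rw [hsum, ← prod_fiberwise univ (fun t => (Quotient.mk _ t : orbitRel.Quotient G S))]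
  refine prod_congr rfl fun q _ => ?_
  have hfiber : ∀ t ∈ ({t | Quotient.mk _ t = q} : Finset S),
      ω t ^ n (Quotient.mk _ t) = ω q.out ^ n q := by
    intro t ht
    have ht' := (mem_filter.mp ht).2
    rw [hω _ t (mem_orbit_out_iff.mpr ht'), ht']
  rw [prod_congr rfl hfiber, prod_const, card_filter_mk_eq_natCard_orbit, ← pow_mul, ← pow_mul,
    mul_comm]

end OrbitCounts

theorem bijOn_multisetOfOrbitCounts {S : Type} [Fintype S] (σ : Equiv.Perm S) :
    Set.BijOn (multisetOfOrbitCounts (G := Subgroup.zpowers σ)) Set.univ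
      {M | M.map σ = M} := by
  classical
  refine Set.InvOn.bijOn (f' := fun M q => M.count q.out) ⟨fun n _ => ?_, fun M hM => ?_⟩
    (fun n _ => ?_) (fun _ _ => trivial)
  · funext q
    simp only [count_multisetOfOrbitCounts, Quotient.out_eq]
  · ext t
    rw [count_multisetOfOrbitCounts]
    exact (Equiv.Perm.apply_eq_of_mem_orbit_zpowers (f := (M.count ·))
      ((Multiset.map_perm_eq_self_iff σ M).mp hM) (mem_orbit_out_iff.mpr rfl)).symm
  · rw [Set.mem_ofPred_eq, Multiset.map_perm_eq_self_iff]
    intro t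
    simp only [count_multisetOfOrbitCounts]
    congr 1
    exact Quotient.sound (orbitRel_apply.mpr ⟨⟨σ, Subgroup.mem_zpowers σ⟩, rfl⟩)

theorem statement9 (S : Type) [Fintype S] (σ : Equiv.Perm S) (ω : S → PowerSeries ℝ)
    (hω0 : ∀ s, PowerSeries.constantCoeff (ω s) = 0)
    (hωσ : ∀ s, ω (σ s) = ω s) :
    -- the coefficientwise sum `∑_{M : σ·M = M} ω(M)` equals the product over the
    -- orbits `O_j` of the cyclic group `⟨σ⟩` (with representative `s_j` and size
    -- `r_j = |O_j|`) of `(1 - ω(s_j)^{r_j})⁻¹`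
    (PowerSeries.mk fun d =>
        ∑ᶠ M ∈ {M : Multiset S | M.map σ = M}, PowerSeries.coeff d (msWeight ω M)) =
      ∏ᶠ q : Quotient (orbitRel (Subgroup.zpowers σ) S),
        (1 - ω q.out ^ Nat.card (orbit (Subgroup.zpowers σ) q.out))⁻¹ := by
  classical
  have hω : ∀ s, ∀ t ∈ orbit (Subgroup.zpowers σ) s, ω t = ω s := fun _ _ =>
    Equiv.Perm.apply_eq_of_mem_orbit_zpowers hωσ
  have hw0 : ∀ q : Quotient (orbitRel (Subgroup.zpowers σ) S),
      PowerSeries.constantCoeff (ω q.out ^ Nat.card (orbit (Subgroup.zpowers σ) q.out)) = 0 :=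
    fun q => by
      have : Nonempty (orbit (Subgroup.zpowers σ) q.out) := (nonempty_orbit _).to_subtype
      rw [map_pow, hω0, zero_pow Nat.card_pos.ne']
  change PowerSeries.coeffwiseSum {M | M.map σ = M} (msWeight ω) = _
  rw [finprod_eq_prod_of_fintype, ← PowerSeries.coeffwiseSum_prod_pow _ hw0,
    PowerSeries.coeffwiseSum_of_bijOn _ (bijOn_multisetOfOrbitCounts σ)]
  exact congrArg _ (funext (msWeight_multisetOfOrbitCounts hω))
end
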